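/- arXiv:2512.04693 — 7 statements merged into one kernel-verified Lean document; each statement's English description precedes it below -/
import Mathlib

section
/- Let G be a graph with two non-adjacent vertices x and y. Then χ(G) = min(χ(G'_{xy}), χ(G''_{xy})), where G'_{xy} is obtained from G by adding the edge {x,y}, and G''_{xy} is obtained from G by identifying x and y into a single new vertex (merging their neighborhoods, without creating parallel edges). -/
open SimpleGraph

/-!
A proper coloring of `G` either separates `x` and `y`, and is then a coloring of `G + xy`, or
gives them the same color, and then descends to `G / xy`; so `min (χ(G + xy), χ(G / xy)) ≤ χ(G)`.
Conversely `G` is a subgraph of `G + xy` and maps homomorphically onto `G / xy` (as `x`, `y` are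
non-adjacent), which gives the other inequality.
-/

/-- Zykov identification of non-adjacent vertices x and y: the vertex y is removed and
its adjacencies are transferred to x (no parallel edges can arise). -/
def identify {V : Type*} (G : SimpleGraph V) (x y : V) : SimpleGraph {v : V // v ≠ y} where
  Adj a b := a ≠ b ∧ (G.Adj a b ∨ ((a : V) = x ∧ G.Adj y b) ∨ ((b : V) = x ∧ G.Adj (a : V) y))
  symm := by
    constructor
    rintro a b ⟨hne, h⟩
    refine ⟨hne.symm, ?_⟩
    rcases h with h | ⟨ha, hb⟩ | ⟨hb, ha⟩
    · exact Or.inl h.symm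
    · exact Or.inr (Or.inr ⟨ha, hb.symm⟩)
    · exact Or.inr (Or.inl ⟨hb, ha.symm⟩)
  loopless := by constructor; rintro a ⟨hne, -⟩; exact hne rfl

namespace SimpleGraph

variable {V α : Type*} {G : SimpleGraph V} {x y : V}

def identifyHom [DecidableEq V] (hxy : x ≠ y) (hna : ¬ G.Adj x y) : G →g identify G x y where
  toFun v := if hv : v = y then ⟨x, hxy⟩ else ⟨v, hv⟩
  map_rel' {a b} hab := by
    have hne : a ≠ b := G.ne_of_adj hab
    by_cases ha : a = y <;> by_cases hb : b = y
    · exact absurd (ha.trans hb.symm) hne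
    · subst ha
      have hbx : b ≠ x := by rintro rfl; exact hna hab.symm
      simp only [dif_pos, dif_neg hb]
      exact ⟨fun h => hbx (congrArg Subtype.val h).symm, Or.inr (Or.inl ⟨rfl, hab⟩)⟩
    · subst hb
      have hax : a ≠ x := by rintro rfl; exact hna hab
      simp only [dif_pos, dif_neg ha]
      exact ⟨fun h => hax (congrArg Subtype.val h), Or.inr (Or.inr ⟨rfl, hab⟩)⟩
    · simp only [dif_neg ha, dif_neg hb]
      exact ⟨fun h => hne (congrArg Subtype.val h), Or.inl hab⟩

def Coloring.toIdentify (C : G.Coloring α) (h : C x = C y) : (identify G x y).Coloring α :=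
  Coloring.mk (fun a => C a) <| by
    rintro a b ⟨-, hab | ⟨ha, hyb⟩ | ⟨hb, hay⟩⟩
    · exact C.valid hab
    · rw [ha, h]; exact C.valid hyb
    · rw [hb, h]; exact C.valid hay

def Coloring.toSupEdge (C : G.Coloring α) (h : C x ≠ C y) :
    (G ⊔ fromEdgeSet {s(x, y)}).Coloring α :=
  Coloring.mk C <| by
    rintro a b (hab | ⟨he, -⟩)
    · exact C.valid hab
    · rcases Sym2.eq_iff.1 he with ⟨rfl, rfl⟩ | ⟨rfl, rfl⟩
      exacts [h, h.symm]

theorem Colorable.supEdge_or_identify {n : ℕ} (hG : G.Colorable n) :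
    (G ⊔ fromEdgeSet {s(x, y)}).Colorable n ∨ (identify G x y).Colorable n := by
  obtain ⟨C⟩ := hG
  by_cases h : C x = C y
  · exact .inr ⟨C.toIdentify h⟩
  · exact .inl ⟨C.toSupEdge h⟩

end SimpleGraph

theorem stmt_2_general {V : Type*} (G : SimpleGraph V) (x y : V) (hxy : x ≠ y)
    (hna : ¬ G.Adj x y) :
    G.chromaticNumber =
      min ((G ⊔ SimpleGraph.fromEdgeSet {s(x, y)}).chromaticNumber)
        ((identify G x y).chromaticNumber) := by
  classical
  refine le_antisymm (le_min (chromaticNumber_mono _ le_sup_left)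
    (chromaticNumber_mono_of_hom (identifyHom hxy hna))) ?_
  rw [chromaticNumber_eq_biInf]
  refine le_iInf₂ fun n (hn : G.Colorable n) => ?_
  rcases hn.supEdge_or_identify (x := x) (y := y) with h | h
  · exact (min_le_left _ _).trans h.chromaticNumber_le
  · exact (min_le_right _ _).trans h.chromaticNumber_le

/-- Zykov: χ(G) = min(χ(G + xy), χ(G / {x=y})) for non-adjacent x, y. -/
theorem stmt_2 {V : Type*} [Fintype V] (G : SimpleGraph V) (x y : V) (hxy : x ≠ y)
    (hna : ¬ G.Adj x y) :
    G.chromaticNumber =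
      min ((G ⊔ SimpleGraph.fromEdgeSet {s(x, y)}).chromaticNumber)
        ((identify G x y).chromaticNumber) :=
  stmt_2_general G x y hxy hna
end

section
/- Let k ∈ ℕ, let G = (V,E) be a graph with V = A ∪ B, A ∩ B = ∅, and let 𝔟 : A → 𝒫(B) be a function. Let H be the graph with vertex set V and edge set E ∪ {{a,z} : a ∈ A, z ∈ 𝔟(a)}. Suppose deg_G(a) + |𝔟(a)| ≤ k for each a ∈ A. If χ(G) ≤ k+1, then χ(H) ≤ k+1. -/
/-!
Colour `G` with `k + 1` colours and recolour the vertices of `A` greedily, one at a time.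
Since every `𝔟(a)` lies in `B`, no added edge joins two vertices of `A`, so the edges of `H`
avoiding `A` are edges of `G`, and a vertex `a ∈ A` has at most `deg_G(a) + |𝔟(a)| ≤ k`
neighbours in `H`: one of the `k + 1` colours is always free for it.
-/

open SimpleGraph

/-- Degree of a vertex: the cardinality of its neighbor set. -/
noncomputable def ndeg {V : Type*} (G : SimpleGraph V) (v : V) : ℕ := (G.neighborSet v).ncard

/-- The graph represented by (G, A, B, b): G together with all edges {a, z} for a ∈ A, z ∈ b a. -/
def repGraph {V : Type*} (G : SimpleGraph V) (A : Set V) (b : V → Set V) : SimpleGraph V :=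
  G ⊔ SimpleGraph.fromRel (fun u v => u ∈ A ∧ v ∈ b u)

namespace SimpleGraph

variable {V : Type*}

section Greedy

variable (H : SimpleGraph V) {n : ℕ}

def IsColoringOff (S : Set V) (c : V → Fin n) : Prop :=
  ∀ ⦃u v⦄, H.Adj u v → u ∉ S → v ∉ S → c u ≠ c v

variable {H}

-- `encard` rather than `ncard`, which would count an infinite neighbourhood as empty.
lemma IsColoringOff.exists_of_insert {S : Set V} {a : V} {c : V → Fin n}
    (hc : H.IsColoringOff (insert a S) c) (ha : (H.neighborSet a).encard < n) :
    ∃ c' : V → Fin n, H.IsColoringOff S c' := by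
  classical
  obtain ⟨x, hx⟩ : ∃ x, x ∉ c '' H.neighborSet a := by
    by_contra! h
    have hlt : (c '' H.neighborSet a).encard < n := (Set.encard_image_le _ _).trans_lt ha
    simp [Set.eq_univ_of_forall h] at hlt
  have hfree : ∀ v, H.Adj a v → x ≠ c v := fun v hv hxv => hx ⟨v, hv, hxv.symm⟩
  refine ⟨Function.update c a x, fun u v huv hu hv => ?_⟩
  rcases eq_or_ne u a with rfl | hua
  · simpa [huv.ne.symm] using hfree v huv
  rcases eq_or_ne v a with rfl | hva
  · simpa [hua] using (hfree u huv.symm).symm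
  simpa [hua, hva] using hc huv (by simp [hua, hu]) (by simp [hva, hv])

theorem colorable_of_isColoringOff {S : Set V} (hS : S.Finite)
    (hdeg : ∀ v ∈ S, (H.neighborSet v).encard < n) {c : V → Fin n}
    (hc : H.IsColoringOff S c) : H.Colorable n := by
  induction S, hS using Set.Finite.induction_on generalizing c with
  | empty => exact ⟨Coloring.mk c fun h => hc h (Set.notMem_empty _) (Set.notMem_empty _)⟩
  | @insert a S _ _ ih =>
    obtain ⟨c', hc'⟩ := hc.exists_of_insert (hdeg a (Set.mem_insert a S))
    exact ih (fun v hv => hdeg v (Set.mem_insert_of_mem a hv)) hc'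

end Greedy

variable {G : SimpleGraph V} {A : Set V} {b : V → Set V}

lemma repGraph_adj {u v : V} :
    (repGraph G A b).Adj u v ↔
      G.Adj u v ∨ u ≠ v ∧ (u ∈ A ∧ v ∈ b u ∨ v ∈ A ∧ u ∈ b v) := by
  simp [repGraph]

lemma adj_of_repGraph_adj {u v : V} (hu : u ∉ A) (hv : v ∉ A)
    (h : (repGraph G A b).Adj u v) : G.Adj u v := by
  rcases repGraph_adj.1 h with h | ⟨-, ⟨hu', -⟩ | ⟨hv', -⟩⟩
  exacts [h, absurd hu' hu, absurd hv' hv]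

lemma neighborSet_repGraph_subset (hbA : ∀ a ∈ A, Disjoint (b a) A) {a : V} (ha : a ∈ A) :
    (repGraph G A b).neighborSet a ⊆ G.neighborSet a ∪ b a := by
  intro v hv
  rcases repGraph_adj.1 hv with h | ⟨-, ⟨-, h⟩ | ⟨hv, h⟩⟩
  exacts [Or.inl h, Or.inr h, absurd ha (Set.disjoint_left.1 (hbA v hv) h)]

end SimpleGraph

theorem stmt_5_general {V : Type*} [Fintype V] (G : SimpleGraph V) (A B : Set V)
    (hdisj : Disjoint A B) (b : V → Set V)
    (hb : ∀ a ∈ A, b a ⊆ B) (k : ℕ)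
    (hdeg : ∀ a ∈ A, ndeg G a + (b a).ncard ≤ k)
    (hG : G.Colorable (k + 1)) :
    (repGraph G A b).Colorable (k + 1) := by
  obtain ⟨c⟩ := hG
  have hbA : ∀ a ∈ A, Disjoint (b a) A := fun a ha => (hdisj.mono_right (hb a ha)).symm
  refine colorable_of_isColoringOff A.toFinite (fun a ha => ?_)
    (fun u v huv hu hv => c.valid (adj_of_repGraph_adj hu hv huv))
  calc ((repGraph G A b).neighborSet a).encard
      ≤ (G.neighborSet a ∪ b a).encard :=
        Set.encard_le_encard (neighborSet_repGraph_subset hbA ha)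
    _ ≤ (G.neighborSet a).encard + (b a).encard := Set.encard_union_le _ _
    _ = (ndeg G a + (b a).ncard : ℕ) := by
        simp [ndeg]
    _ < k + 1 := by exact_mod_cast Nat.lt_succ_of_le (hdeg a ha)

/-- Greedy bound: if H is represented by (G, A, B, b) with deg_G(a) + |b(a)| ≤ k for all
a ∈ A, and χ(G) ≤ k+1, then χ(H) ≤ k+1. -/
theorem stmt_5 {V : Type*} [Fintype V] (G : SimpleGraph V) (A B : Set V)
    (hU : A ∪ B = Set.univ) (hdisj : Disjoint A B) (b : V → Set V)
    (hb : ∀ a ∈ A, b a ⊆ B) (k : ℕ)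
    (hdeg : ∀ a ∈ A, ndeg G a + (b a).ncard ≤ k)
    (hG : G.Colorable (k + 1)) :
    (repGraph G A b).Colorable (k + 1) :=
  stmt_5_general G A B hdisj b hb k hdeg hG
end

section
/- Let G = (V,E) be a graph with V = A ∪ B, A ∩ B = ∅, such that no non-trivial block of G contains a vertex of A. Let C be a connected component of the induced subgraph G[B], and let v ∈ V be a vertex adjacent in G to some vertex of C but with v ∉ V(C). Then v is adjacent in G to exactly one vertex of C. -/
/-!
If `v` had two distinct neighbours `a, b` in `C`, then `v ∉ B` (otherwise `v` would lie in `C`), so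
`v ∈ A`. A path from `b` to `a` inside `C` avoids `v` and closes up with the edges `va`, `vb` to a
cycle through `v` on at least three vertices. A cycle is connected without cut vertex, so in a
finite graph it lies in a block, which is then non-trivial and contains `v ∈ A`.
-/

open SimpleGraph

/-- A subgraph has no cut vertex: deleting any vertex leaves it connected (if nonempty). -/
def NoCutVertex {V : Type*} {G : SimpleGraph V} (H : G.Subgraph) : Prop :=
  ∀ v ∈ H.verts, (H.deleteVerts {v}).verts.Nonempty → (H.deleteVerts {v}).Connected

/-- A block of G: a maximal connected subgraph without a cut vertex. -/
def IsBlock {V : Type*} (G : SimpleGraph V) (H : G.Subgraph) : Prop :=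
  H.Connected ∧ NoCutVertex H ∧
    ∀ H' : G.Subgraph, H ≤ H' → H'.Connected → NoCutVertex H' → H' = H

namespace SimpleGraph

variable {V : Type*} {G : SimpleGraph V}

theorem exists_isBlock_le [Finite V] {H : G.Subgraph} (hH : H.Connected) (hcut : NoCutVertex H) :
    ∃ Z, H ≤ Z ∧ IsBlock G Z := by
  obtain ⟨Z, hHZ, ⟨hZ, hZcut⟩, hmax⟩ :=
    Finite.exists_le_maximal (p := fun H : G.Subgraph ↦ H.Connected ∧ NoCutVertex H) ⟨hH, hcut⟩
  exact ⟨Z, hHZ, hZ, hZcut, fun H' hle hH' hcut' ↦ le_antisymm (hmax ⟨hH', hcut'⟩ hle) hle⟩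

namespace Walk

variable {u v x : V}

theorem IsPath.connected_toSubgraph_deleteVerts_start {p : G.Walk u v} (hp : p.IsPath)
    (huv : u ≠ v) : (p.toSubgraph.deleteVerts {u}).Connected := by
  cases p with
  | nil => exact absurd rfl huv
  | cons h q =>
    have hu : u ∉ q.support := ((cons_isPath_iff h q).mp hp).2
    have hverts : q.toSubgraph.verts = ((cons h q).toSubgraph.deleteVerts {u}).verts := by
      ext w
      simp only [Subgraph.deleteVerts_verts, mem_verts_toSubgraph, support_cons, Set.mem_sdiff,
        List.mem_cons, Set.mem_singleton_iff]
      exact ⟨fun hw ↦ ⟨Or.inr hw, by rintro rfl; exact hu hw⟩, fun ⟨hw, hne⟩ ↦ hw.resolve_left hne⟩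
    have hle : q.toSubgraph ≤ (cons h q).toSubgraph := le_sup_right
    refine q.toSubgraph_connected.mono ⟨hverts.le, fun a b hab ↦ ?_⟩ hverts
    have ha := hverts.le hab.fst_mem
    have hb := hverts.le hab.snd_mem
    exact Subgraph.deleteVerts_adj.mpr ⟨ha.1, ha.2, hb.1, hb.2, hle.2 hab⟩

theorem IsCycle.connected_toSubgraph_deleteVerts_start {c : G.Walk x x} (hc : c.IsCycle) :
    (c.toSubgraph.deleteVerts {x}).Connected := by
  cases c with
  | nil => exact absurd rfl hc.ne_nil
  | cons h p =>
    have hp : p.reverse.IsPath := isPath_reverse_iff p |>.mpr ((cons_isCycle_iff p h).mp hc).1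
    refine (toSubgraph_reverse p ▸ hp.connected_toSubgraph_deleteVerts_start h.ne).mono
      (Subgraph.deleteVerts_mono le_sup_right) ?_
    ext w
    simp only [Subgraph.deleteVerts_verts, mem_verts_toSubgraph, support_cons, Set.mem_sdiff,
      List.mem_cons, Set.mem_singleton_iff]
    grind

theorem IsCycle.noCutVertex_toSubgraph {c : G.Walk x x} (hc : c.IsCycle) :
    NoCutVertex c.toSubgraph := by
  classical
  intro w hw _
  rw [mem_verts_toSubgraph] at hw
  simpa only [toSubgraph_rotate c hw] using
    (hc.rotate hw).connected_toSubgraph_deleteVerts_start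

theorem IsPath.isCycle_cons_concat {p : G.Walk u v} (hp : p.IsPath) (huv : u ≠ v)
    (hxu : G.Adj x u) (hvx : G.Adj v x) (hx : x ∉ p.support) :
    (cons hxu (p.concat hvx)).IsCycle := by
  -- `cons hxu (p.concat hvx)` unfolds to `(cons hxu p).append (cons hvx nil)`.
  refine (hp.cons hx (h := hxu)).isCycle_append (q := cons hvx Walk.nil) (by simp [hvx.ne])
    (by simp [hx]) (Or.inl ?_)
  exact Nat.succ_lt_succ (not_nil_iff_lt_length.mp (not_nil_of_ne huv))

end Walk

namespace ConnectedComponent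

variable {B : Set V} (C : (G.induce B).ConnectedComponent)

theorem mem_image_val_supp_of_adj {u v : V} (hv : v ∈ B) (hu : u ∈ Subtype.val '' C.supp)
    (huv : G.Adj u v) : v ∈ Subtype.val '' C.supp := by
  obtain ⟨u, hu, rfl⟩ := hu
  exact ⟨⟨v, hv⟩, C.mem_supp_of_adj_mem_supp hu huv, rfl⟩

theorem exists_isPath_support_subset_image_val_supp {a b : B} (ha : a ∈ C.supp)
    (hb : b ∈ C.supp) :
    ∃ p : G.Walk a b, p.IsPath ∧ ∀ x ∈ p.support, x ∈ Subtype.val '' C.supp := by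
  classical
  obtain ⟨p, hp⟩ := (C.reachable_of_mem_supp ha hb).exists_isPath
  refine ⟨p.map (Embedding.induce (G := G) B).toHom, hp.map Subtype.val_injective, ?_⟩
  intro y hy
  obtain ⟨x, hx, rfl⟩ := List.mem_map.mp (p.support_map _ ▸ hy)
  exact ⟨x, (ConnectedComponent.sound (p.takeUntil x hx).reachable.symm).trans ha, rfl⟩

end ConnectedComponent

end SimpleGraph

theorem stmt_7_general {V : Type*} [Fintype V] (G : SimpleGraph V) (A B : Set V)
    (hU : A ∪ B = Set.univ)
    (hblock : ∀ Z : G.Subgraph, IsBlock G Z → 2 < Z.verts.ncard → ∀ a ∈ A, a ∉ Z.verts)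
    (C : (G.induce B).ConnectedComponent) (v : V)
    (hv : v ∉ Subtype.val '' C.supp)
    (hadj : ∃ u ∈ Subtype.val '' C.supp, G.Adj v u) :
    ∃! u, u ∈ Subtype.val '' C.supp ∧ G.Adj v u := by
  obtain ⟨_, ⟨a, ha, rfl⟩, hva⟩ := hadj
  refine ⟨a, ⟨⟨a, ha, rfl⟩, hva⟩, ?_⟩
  rintro _ ⟨⟨b, hb, rfl⟩, hvb⟩
  by_contra! hab
  have hvA : v ∈ A := by
    have hvB : v ∉ B := fun hvB ↦ hv (C.mem_image_val_supp_of_adj hvB ⟨a, ha, rfl⟩ hva.symm)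
    simpa [hvB] using hU.ge (Set.mem_univ v)
  obtain ⟨p, hp, hpC⟩ := C.exists_isPath_support_subset_image_val_supp hb ha
  have hc := hp.isCycle_cons_concat hab hvb hva.symm fun h ↦ hv (hpC v h)
  obtain ⟨Z, hcZ, hZ⟩ := exists_isBlock_le (Walk.toSubgraph_connected _) hc.noCutVertex_toSubgraph
  refine hblock Z hZ ?_ v hvA (hcZ.1 (Walk.start_mem_verts_toSubgraph _))
  rw [Set.two_lt_ncard Z.verts.toFinite]
  have hvC : ∀ u ∈ Subtype.val '' C.supp, v ≠ u := fun u hu h ↦ hv (h ▸ hu)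
  refine ⟨v, hcZ.1 ?_, a, hcZ.1 ?_, b, hcZ.1 ?_, hvC _ ⟨a, ha, rfl⟩, hvC _ ⟨b, hb, rfl⟩, hab.symm⟩ <;>
    simp

/-- If no non-trivial block of G contains a vertex of A and C is a connected component of
G[B], then any vertex outside C adjacent to C is adjacent to exactly one vertex of C. -/
theorem stmt_7 {V : Type*} [Fintype V] (G : SimpleGraph V) (A B : Set V)
    (hU : A ∪ B = Set.univ) (hdisj : Disjoint A B)
    (hblock : ∀ Z : G.Subgraph, IsBlock G Z → 2 < Z.verts.ncard → ∀ a ∈ A, a ∉ Z.verts)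
    (C : (G.induce B).ConnectedComponent) (v : V)
    (hv : v ∉ Subtype.val '' C.supp)
    (hadj : ∃ u ∈ Subtype.val '' C.supp, G.Adj v u) :
    ∃! u, u ∈ Subtype.val '' C.supp ∧ G.Adj v u :=
  stmt_7_general G A B hU hblock C v hv hadj
end

section
/- Every strongly tree-based phylogenetic network N has a 3-basis G with χ(G) ≤ 2. More precisely, there exist a spanning tree T of N, disjoint sets A, B partitioning V(N), and a map 𝔟 : A → 𝒫(B) such that (T, A, B, 𝔟) represents N, no non-trivial block of T contains a vertex of A (trivially, since T is a tree), deg_T(a) ≥ 2 and deg_T(a) + |𝔟(a)| ≤ 3 for all a ∈ A, and χ(T) ≤ 2. -/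
open SimpleGraph

/-- T is a spanning tree of G witnessing strong tree-basedness: T is a spanning tree whose
leaves are exactly the leaves of G, every edge of G between vertices of G-degree ≥ 4 is an
edge of T, and every vertex of T-degree 2 has G-degree 3. -/
def IsSTBWitness {V : Type*} (G T : SimpleGraph V) : Prop :=
  T ≤ G ∧ T.IsTree ∧ (∀ v, ndeg T v = 1 ↔ ndeg G v = 1) ∧
    (∀ u v, G.Adj u v → 4 ≤ ndeg G u → 4 ≤ ndeg G v → T.Adj u v) ∧
    (∀ v, ndeg T v = 2 → ndeg G v = 3)

/-! Take the spanning tree `T` witnessing strong tree-basedness. An edge of `N` outside `T`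
cannot join two vertices of degree at least 4, and an endpoint `x` of degree at most 3 has
`T`-degree at least 2 (`T` is connected, and its leaves are the leaves of `N`); so `x` has
degree exactly 3 and carries no other edge outside `T`. Hence `A` can consist of such
endpoints (the smaller in a fixed linear order when both qualify) with `𝔟(a)` the non-tree
neighbour of `a`. A tree has no block with more than two vertices, and is 2-colourable. -/

namespace SimpleGraph

variable {V : Type*}

lemma Subgraph.reachable_deleteEdges_of_reachable_deleteVerts {G : SimpleGraph V}
    {H : G.Subgraph} {x : V} {e : Sym2 V} (hx : x ∈ e) {a b : (H.deleteVerts {x}).verts}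
    (h : (H.deleteVerts {x}).coe.Reachable a b) : (G.deleteEdges {e}).Reachable a b := by
  refine h.map ⟨fun a ↦ a.val, fun {a b} hab ↦ ?_⟩
  refine (SimpleGraph.deleteEdges_adj ..).mpr ⟨(H.deleteVerts {x}).adj_sub hab, fun he ↦ ?_⟩
  rw [Set.mem_singleton_iff] at he
  rcases Sym2.mem_iff.mp (he ▸ hx) with hxa | hxb
  exacts [a.2.2 hxa.symm, b.2.2 hxb.symm]

lemma IsAcyclic.ncard_verts_le_two_of_noCutVertex {T : SimpleGraph V} (hT : T.IsAcyclic)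
    {Z : T.Subgraph} (hZ : Z.Connected) (hZcut : NoCutVertex Z) : Z.verts.ncard ≤ 2 := by
  by_contra! hcard
  have : Nontrivial Z.verts := Set.nontrivial_coe_sort.mpr <|
    (Set.one_lt_ncard (Set.finite_of_ncard_pos (by omega))).mp (by omega)
  obtain ⟨u, hu⟩ := hZ.nonempty
  obtain ⟨v, huv⟩ := hZ.preconnected.exists_adj_of_nontrivial ⟨u, hu⟩
  obtain ⟨w, hwZ, hwuv⟩ : (Z.verts \ {u, v}).Nonempty := by
    by_contra! hempty
    have := Set.ncard_le_ncard (Set.sdiff_eq_empty.mp hempty)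
    have := Set.ncard_insert_le u {v}
    rw [Set.ncard_singleton] at this
    omega
  have hu' : u ∈ (Z.deleteVerts {v}).verts := ⟨hu, huv.ne⟩
  have hv' : v ∈ (Z.deleteVerts {u}).verts := ⟨Z.edge_vert huv.symm, huv.ne.symm⟩
  have hw₁ : w ∈ (Z.deleteVerts {v}).verts := ⟨hwZ, fun h ↦ hwuv (.inr h)⟩
  have hw₂ : w ∈ (Z.deleteVerts {u}).verts := ⟨hwZ, fun h ↦ hwuv (.inl h)⟩
  -- `u - w` avoiding `v` and `w - v` avoiding `u` reconnect `u` and `v` without the edge `uv`.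
  have huw := Subgraph.reachable_deleteEdges_of_reachable_deleteVerts (Sym2.mem_mk_right u v)
    ((hZcut v (Z.edge_vert huv.symm) ⟨u, hu'⟩) ⟨u, hu'⟩ ⟨w, hw₁⟩)
  have hwv := Subgraph.reachable_deleteEdges_of_reachable_deleteVerts (Sym2.mem_mk_left u v)
    ((hZcut u hu ⟨v, hv'⟩) ⟨w, hw₂⟩ ⟨v, hv'⟩)
  exact isAcyclic_iff_forall_adj_isBridge.mp hT (Z.adj_sub huv) (huw.trans hwv)

end SimpleGraph

section Degree

variable {V : Type*} [Finite V] {N T : SimpleGraph V}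

lemma ndeg_add_ndeg_sdiff (hTN : T ≤ N) (v : V) : ndeg T v + ndeg (N \ T) v = ndeg N v := by
  have hdisj : Disjoint (T.neighborSet v) ((N \ T).neighborSet v) :=
    Set.disjoint_left.mpr fun _ hT hNT ↦ hNT.2 hT
  rw [ndeg, ndeg, ← Set.ncard_union_eq hdisj, ← neighborSet_sup, sup_sdiff_cancel_right hTN, ndeg]

lemma ndeg_pos_of_adj {v w : V} (h : N.Adj v w) : 0 < ndeg N v :=
  (Set.ncard_pos (Set.toFinite _)).mpr ⟨w, h⟩

end Degree

namespace IsSTBWitness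

variable {V : Type*} {N T : SimpleGraph V}

lemma ndeg_le_three_or_ndeg_le_three (hT : IsSTBWitness N T) {u v : V} (h : (N \ T).Adj u v) :
    ndeg N u ≤ 3 ∨ ndeg N v ≤ 3 := by
  by_contra! hheavy
  exact h.2 (hT.2.2.2.1 u v h.1 hheavy.1 hheavy.2)

lemma two_le_ndeg_of_sdiff_adj [Finite V] (hT : IsSTBWitness N T) {x z : V}
    (h : (N \ T).Adj x z) : 2 ≤ ndeg T x := by
  obtain ⟨hTN, htree, hleaf, -⟩ := hT
  have : Nontrivial V := ⟨⟨x, z, h.ne⟩⟩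
  obtain ⟨y, hxy⟩ := htree.connected.preconnected.exists_adj_of_nontrivial x
  have hsum := ndeg_add_ndeg_sdiff hTN x
  have hleaf_x := hleaf x
  have := ndeg_pos_of_adj hxy
  have := ndeg_pos_of_adj h
  omega

lemma neighborSet_sdiff_eq_singleton [Finite V] (hT : IsSTBWitness N T) {x z : V}
    (h : (N \ T).Adj x z) (hx : ndeg N x ≤ 3) : (N \ T).neighborSet x = {z} := by
  have hsum := ndeg_add_ndeg_sdiff hT.1 x
  have := hT.two_le_ndeg_of_sdiff_adj h
  have := ndeg_pos_of_adj h
  obtain ⟨y, hy⟩ := Set.ncard_eq_one.mp (show ndeg (N \ T) x = 1 by omega)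
  rwa [show z = y from (hy ▸ h : z ∈ ({y} : Set V))]

end IsSTBWitness

section Owners

variable {V : Type*} [LinearOrder V] {N T : SimpleGraph V}

def extraEdgeOwners (N T : SimpleGraph V) : Set V :=
  {x | ndeg N x ≤ 3 ∧ ∃ z, (N \ T).Adj x z ∧ (ndeg N z ≤ 3 → x < z)}

namespace IsSTBWitness

lemma mem_extraEdgeOwners_or_mem (hT : IsSTBWitness N T) {u v : V} (h : (N \ T).Adj u v) :
    u ∈ extraEdgeOwners N T ∨ v ∈ extraEdgeOwners N T := by
  wlog hu : ndeg N u ≤ 3 generalizing u v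
  · exact (this h.symm ((hT.ndeg_le_three_or_ndeg_le_three h).resolve_left hu)).symm
  by_cases hv : ndeg N v ≤ 3
  · rcases h.ne.lt_or_gt with huv | hvu
    · exact .inl ⟨hu, v, h, fun _ ↦ huv⟩
    · exact .inr ⟨hv, u, h.symm, fun _ ↦ hvu⟩
  · exact .inl ⟨hu, v, h, fun hv' ↦ absurd hv' hv⟩

lemma repGraph_extraEdgeOwners (hT : IsSTBWitness N T) :
    repGraph T (extraEdgeOwners N T) (N \ T).neighborSet = N := by
  ext u v
  simp only [repGraph, sup_adj, fromRel_adj, mem_neighborSet]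
  constructor
  · rintro (h | ⟨-, ⟨-, h⟩ | ⟨-, h⟩⟩)
    exacts [hT.1 h, h.1, h.1.symm]
  · intro h
    by_cases hTuv : T.Adj u v
    · exact .inl hTuv
    · have hext : (N \ T).Adj u v := ⟨h, hTuv⟩
      exact .inr ⟨h.ne, (hT.mem_extraEdgeOwners_or_mem hext).imp (⟨·, hext⟩) (⟨·, hext.symm⟩)⟩

lemma neighborSet_sdiff_subset_compl [Finite V] (hT : IsSTBWitness N T) {a : V}
    (ha : a ∈ extraEdgeOwners N T) : (N \ T).neighborSet a ⊆ (extraEdgeOwners N T)ᶜ := by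
  rintro y hay ⟨hy, z', hyz', hz'y⟩
  obtain ⟨ha, z, haz, hza⟩ := ha
  obtain rfl : y = z := (hT.neighborSet_sdiff_eq_singleton haz ha ▸ hay : y ∈ ({z} : Set V))
  obtain rfl : z' = a :=
    (hT.neighborSet_sdiff_eq_singleton hay.symm hy ▸ hyz' : z' ∈ ({a} : Set V))
  exact lt_asymm (hza hy) (hz'y ha)

end IsSTBWitness

end Owners

theorem stmt_8_general {V : Type*} [Fintype V] (N : SimpleGraph V)
    (hstb : ∃ T, IsSTBWitness N T) :
    ∃ (T : SimpleGraph V) (A B : Set V) (b : V → Set V),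
      T ≤ N ∧ T.IsTree ∧
      A ∪ B = Set.univ ∧ Disjoint A B ∧ (∀ a ∈ A, b a ⊆ B) ∧
      N = repGraph T A b ∧
      (∀ Z : T.Subgraph, IsBlock T Z → 2 < Z.verts.ncard → ∀ a ∈ A, a ∉ Z.verts) ∧
      (∀ a ∈ A, 2 ≤ ndeg T a) ∧
      (∀ a ∈ A, ndeg T a + (b a).ncard ≤ 3) ∧
      T.chromaticNumber ≤ 2 := by
  obtain ⟨T, hT⟩ := hstb
  let : LinearOrder V := LinearOrder.lift' _ (Fintype.equivFin V).injective
  refine ⟨T, extraEdgeOwners N T, (extraEdgeOwners N T)ᶜ, (N \ T).neighborSet, hT.1, hT.2.1,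
    Set.union_compl_self _, disjoint_compl_right, fun a ↦ hT.neighborSet_sdiff_subset_compl,
    hT.repGraph_extraEdgeOwners.symm, ?_, ?_, ?_, hT.2.1.chromaticNumber_le_two⟩
  · exact fun Z hZ hcard ↦ absurd hcard
      (hT.2.1.isAcyclic.ncard_verts_le_two_of_noCutVertex hZ.1 hZ.2.1).not_gt
  · rintro a ⟨-, z, haz, -⟩
    exact hT.two_le_ndeg_of_sdiff_adj haz
  · rintro a ⟨ha, -⟩
    exact (ndeg_add_ndeg_sdiff hT.1 a).trans_le ha

/-- Every strongly tree-based network N has a 3-basis T (a spanning tree) with χ(T) ≤ 2. -/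
theorem stmt_8 {V : Type*} [Fintype V] (N : SimpleGraph V) (hconn : N.Connected)
    (hno2 : ∀ v, ndeg N v ≠ 2) (hstb : ∃ T, IsSTBWitness N T) :
    ∃ (T : SimpleGraph V) (A B : Set V) (b : V → Set V),
      T ≤ N ∧ T.IsTree ∧
      A ∪ B = Set.univ ∧ Disjoint A B ∧ (∀ a ∈ A, b a ⊆ B) ∧
      N = repGraph T A b ∧
      (∀ Z : T.Subgraph, IsBlock T Z → 2 < Z.verts.ncard → ∀ a ∈ A, a ∉ Z.verts) ∧
      (∀ a ∈ A, 2 ≤ ndeg T a) ∧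
      (∀ a ∈ A, ndeg T a + (b a).ncard ≤ 3) ∧
      T.chromaticNumber ≤ 2 :=
  stmt_8_general N hstb
end

section
/- Let N be a strongly tree-based phylogenetic network with leaf set X that has a spanning tree T with leaf set X containing all edges of N incident to vertices of degree at least 4 (in N). Then χ(N) ≤ 3. -/
open SimpleGraph

section Aux

variable {V : Type*} [Fintype V]

open Finset in
/-- In an acyclic graph, every nonempty finite set of vertices contains a vertex with at
most one neighbor inside the set. -/
lemma forest_leaf {T : SimpleGraph V} (hA : T.IsAcyclic) (s : Finset V) (hs : s.Nonempty) :
    ∃ v ∈ s, ∀ w₁ ∈ s, ∀ w₂ ∈ s, T.Adj v w₁ → T.Adj v w₂ → w₁ = w₂ := by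
  classical
  -- consider paths with support inside s; take one of maximal length
  set L : Set ℕ := {n : ℕ | ∃ (a b : V) (p : T.Walk a b), p.IsPath ∧
      (∀ x ∈ p.support, x ∈ s) ∧ p.length = n} with hL
  obtain ⟨v₀, hv₀⟩ := hs
  have hLne : L.Nonempty := by
    refine ⟨0, v₀, v₀, SimpleGraph.Walk.nil, by simp, ?_, rfl⟩
    intro x hx
    simp only [SimpleGraph.Walk.support_nil, List.mem_singleton] at hx
    exact hx ▸ hv₀
  have hbdd : BddAbove L := by
    refine ⟨Fintype.card V, ?_⟩
    rintro n ⟨a, b, p, hp, _, rfl⟩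
    exact (hp.length_lt).le
  have hmem := Nat.sSup_mem hLne hbdd
  obtain ⟨a, b, p, hp, hsupp, hlen⟩ := hmem
  refine ⟨a, hsupp a p.start_mem_support, ?_⟩
  -- any neighbor of a inside s must lie on p (else we could extend the path)
  have key : ∀ w ∈ s, T.Adj a w → w = p.getVert 1 := by
    intro w hw haw
    have hwsupp : w ∈ p.support := by
      by_contra hnot
      have hp' : (SimpleGraph.Walk.cons haw.symm p).IsPath := hp.cons hnot
      have hmem' : p.length + 1 ∈ L := by
        refine ⟨w, b, SimpleGraph.Walk.cons haw.symm p, hp', ?_, rfl⟩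
        intro x hx
        rw [SimpleGraph.Walk.support_cons] at hx
        rcases List.mem_cons.mp hx with rfl | hx
        · exact hw
        · exact hsupp x hx
      have := le_csSup hbdd hmem'
      omega
    -- the unique path from a to w is the single edge, so `takeUntil` is that edge
    have htake : p.takeUntil w hwsupp = SimpleGraph.Walk.cons haw SimpleGraph.Walk.nil := by
      have h1 : (⟨p.takeUntil w hwsupp, hp.takeUntil hwsupp⟩ : T.Path a w)
          = SimpleGraph.Path.singleton haw := hA.path_unique _ _
      simpa [SimpleGraph.Path.singleton] using congrArg Subtype.val h1
    have hspec := p.take_spec hwsupp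
    rw [htake] at hspec
    rw [← hspec]
    simp [SimpleGraph.Walk.cons_append, SimpleGraph.Walk.nil_append,
      SimpleGraph.Walk.getVert, SimpleGraph.Walk.getVert_zero]
  intro w₁ hw₁ w₂ hw₂ h₁ h₂
  rw [key w₁ hw₁ h₁, key w₂ hw₂ h₂]

lemma ndeg_eq_degree {G : SimpleGraph V} [DecidableRel G.Adj] (v : V) :
    ndeg G v = G.degree v := by
  rw [ndeg, ← SimpleGraph.card_neighborFinset_eq_degree, ← Set.ncard_coe_finset]
  congr 1
  ext w
  simp

end Aux

open Finset in
/-- If the witnessing spanning tree T contains all edges of N incident to a vertex of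
degree ≥ 4, then χ(N) ≤ 3. -/
theorem stmt_11 {V : Type*} [Fintype V] (N : SimpleGraph V) (hconn : N.Connected)
    (hno2 : ∀ v, ndeg N v ≠ 2) (T : SimpleGraph V) (hT : IsSTBWitness N T)
    (hstrict : ∀ u v, N.Adj u v → 4 ≤ ndeg N u → T.Adj u v) :
    N.chromaticNumber ≤ 3 := by
  classical
  obtain ⟨hle, htree, hleaf, _hbig, hdeg2⟩ := hT
  -- tree neighbors are graph neighbors
  have hsub : ∀ v, T.neighborFinset v ⊆ N.neighborFinset v := by
    intro v w hw
    rw [SimpleGraph.mem_neighborFinset] at hw ⊢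
    exact hle hw
  -- every vertex has at most one non-tree edge
  have nonT : ∀ v, ((N.neighborFinset v) \ (T.neighborFinset v)).card ≤ 1 := by
    intro v
    rw [card_sdiff_of_subset (hsub v), SimpleGraph.card_neighborFinset_eq_degree,
      SimpleGraph.card_neighborFinset_eq_degree, ← ndeg_eq_degree, ← ndeg_eq_degree]
    -- it suffices to show ndeg T v ≥ ndeg N v - 1
    have hTle : ndeg T v ≤ ndeg N v := by
      rw [ndeg_eq_degree, ndeg_eq_degree, ← SimpleGraph.card_neighborFinset_eq_degree,
        ← SimpleGraph.card_neighborFinset_eq_degree]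
      exact card_le_card (hsub v)
    rcases Nat.lt_or_ge (ndeg N v) 4 with hlt | hge
    · -- ndeg N v ∈ {0,1,3}
      interval_cases h : ndeg N v
      · omega
      · have := (hleaf v).mpr h; omega
      · exact absurd h (hno2 v)
      · -- ndeg N v = 3 : show ndeg T v ≥ 2
        have hT1 : ndeg T v ≠ 1 := fun h1 => by have := (hleaf v).mp h1; omega
        have hT0 : ndeg T v ≠ 0 := by
          intro h0
          -- v has an N-neighbor w ≠ v, and T is connected, so v has a T-neighbor
          have hpos : 0 < ndeg N v := by omega
          rw [ndeg_eq_degree, ← SimpleGraph.card_neighborFinset_eq_degree,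
            card_pos] at hpos
          obtain ⟨w, hw⟩ := hpos
          rw [SimpleGraph.mem_neighborFinset] at hw
          obtain ⟨p⟩ := (htree.isConnected.preconnected v w : T.Reachable v w)
          cases p with
          | nil => exact hw.ne rfl
          | cons h q =>
              have : _ ∈ T.neighborFinset v := (SimpleGraph.mem_neighborFinset ..).2 h
              rw [ndeg_eq_degree, ← SimpleGraph.card_neighborFinset_eq_degree] at h0
              rw [card_eq_zero.mp h0] at this
              simpa using this
        omega
    · -- all edges at v are in T
      have : N.neighborFinset v ⊆ T.neighborFinset v := by
        intro w hw
        rw [SimpleGraph.mem_neighborFinset] at hw ⊢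
        exact hstrict v w hw hge
      have := card_le_card this
      rw [SimpleGraph.card_neighborFinset_eq_degree,
        SimpleGraph.card_neighborFinset_eq_degree, ← ndeg_eq_degree, ← ndeg_eq_degree] at this
      omega
  -- 2-degeneracy
  have hdegen : ∀ s : Finset V, s.Nonempty →
      ∃ v ∈ s, (s.filter (fun w => N.Adj v w)).card ≤ 2 := by
    intro s hs
    obtain ⟨v, hv, hv1⟩ := forest_leaf htree.IsAcyclic s hs
    refine ⟨v, hv, ?_⟩
    have hsplit : s.filter (fun w => N.Adj v w) ⊆
        s.filter (fun w => T.Adj v w) ∪ ((N.neighborFinset v) \ (T.neighborFinset v)) := by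
      intro w hw
      rw [mem_filter] at hw
      by_cases hTw : T.Adj v w
      · exact mem_union_left _ (mem_filter.2 ⟨hw.1, hTw⟩)
      · refine mem_union_right _ (mem_sdiff.2 ⟨?_, ?_⟩) <;>
          simp [SimpleGraph.mem_neighborFinset, hw.2, hTw]
    have h1 : (s.filter (fun w => T.Adj v w)).card ≤ 1 := by
      refine card_le_one.mpr ?_
      intro w₁ hw₁ w₂ hw₂
      rw [mem_filter] at hw₁ hw₂
      exact hv1 w₁ hw₁.1 w₂ hw₂.1 hw₁.2 hw₂.2
    calc (s.filter (fun w => N.Adj v w)).card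
        ≤ (s.filter (fun w => T.Adj v w) ∪ ((N.neighborFinset v) \ (T.neighborFinset v))).card :=
          card_le_card hsplit
      _ ≤ _ + _ := card_union_le _ _
      _ ≤ 2 := by have := nonT v; omega
  -- greedy 3-coloring by strong induction on finsets
  have hcolor : ∀ s : Finset V, ∃ f : V → Fin 3,
      ∀ u ∈ s, ∀ w ∈ s, N.Adj u w → f u ≠ f w := by
    intro s
    induction s using Finset.strongInduction with
    | _ s ih =>
      rcases s.eq_empty_or_nonempty with rfl | hs
      · exact ⟨fun _ => 0, by simp⟩
      obtain ⟨v, hv, hvdeg⟩ := hdegen s hs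
      obtain ⟨f, hf⟩ := ih (s.erase v) (erase_ssubset hv)
      have himg : ((s.filter (fun w => N.Adj v w)).image f).card < 3 :=
        lt_of_le_of_lt (card_image_le.trans hvdeg) (by norm_num)
      have : ∃ c : Fin 3, c ∉ (s.filter (fun w => N.Adj v w)).image f := by
        by_contra hc
        push_neg at hc
        have : (Finset.univ : Finset (Fin 3)) ⊆ (s.filter (fun w => N.Adj v w)).image f :=
          fun c _ => hc c
        have := card_le_card this
        simp at this
        omega
      obtain ⟨c, hc⟩ := this
      refine ⟨Function.update f v c, ?_⟩
      intro u hu w hw hadj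
      have hne : u ≠ w := hadj.ne
      by_cases huv : u = v
      · have hwv : w ≠ v := fun h => hne (huv.trans h.symm)
        rw [huv, Function.update_self, Function.update_of_ne hwv]
        intro h
        exact hc (mem_image.2 ⟨w, mem_filter.2 ⟨hw, huv ▸ hadj⟩, h.symm⟩)
      · by_cases hwv : w = v
        · rw [hwv, Function.update_self, Function.update_of_ne huv]
          intro h
          exact hc (mem_image.2 ⟨u, mem_filter.2 ⟨hu, (hwv ▸ hadj).symm⟩, h⟩)
        · rw [Function.update_of_ne huv, Function.update_of_ne hwv]
          exact hf u (mem_erase.2 ⟨huv, hu⟩) w (mem_erase.2 ⟨hwv, hw⟩) hadj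
  obtain ⟨f, hf⟩ := hcolor Finset.univ
  have : N.Colorable 3 :=
    ⟨SimpleGraph.Coloring.mk f fun {u w} h => hf u (mem_univ u) w (mem_univ w) h⟩
  simpa using this.chromaticNumber_le
end

section
/- Let N be a strongly tree-based phylogenetic network. Then χ(N) ≤ 4. -/
open SimpleGraph

/-- In a tree, adjacent vertices have different distances from any root. -/
lemma tree_adj_dist_ne {V : Type*} {T : SimpleGraph V} (ht : T.IsTree) (r : V) {u v : V}
    (h : T.Adj u v) : T.dist r u ≠ T.dist r v := by
  classical
  intro heq
  obtain ⟨p, hp, hpl⟩ := ht.isConnected.exists_path_of_dist r u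
  obtain ⟨q, hq, hql⟩ := ht.isConnected.exists_path_of_dist r v
  have hv : v ∉ p.support := by
    intro hv
    have h1 := p.take_spec hv
    have hlen : (p.takeUntil v hv).length + (p.dropUntil v hv).length = p.length := by
      rw [← Walk.length_append, h1]
    have hd : (p.dropUntil v hv).length ≠ 0 := fun h0 =>
      h.ne' (Walk.eq_of_length_eq_zero h0)
    have h2 : T.dist r v ≤ (p.takeUntil v hv).length := dist_le _
    omega
  have hP : (Walk.cons h.symm p.reverse).IsPath := by
    apply hp.reverse.cons
    simpa using hv
  have huniq := ht.IsAcyclic.path_unique ⟨Walk.cons h.symm p.reverse, hP⟩ ⟨q.reverse, hq.reverse⟩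
  have hlen := congrArg (fun P : T.Path v r => P.1.length) huniq
  simp only [Walk.length_cons, Walk.length_reverse] at hlen
  omega

set_option maxHeartbeats 1000000 in
/-- Every strongly tree-based network is 4-colorable. -/
theorem stmt_14 {V : Type*} [Fintype V] (N : SimpleGraph V) (hconn : N.Connected)
    (hno2 : ∀ v, ndeg N v ≠ 2) (hstb : ∃ T, IsSTBWitness N T) :
    N.chromaticNumber ≤ 4 := by
  classical
  obtain ⟨T, hle, htree, hleaf, h4, h2⟩ := hstb
  set F := N \ T with hF
  -- basic facts about neighbor sets
  have hsub : ∀ u : V, T.neighborSet u ⊆ N.neighborSet u := fun u x hx => hle hx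
  have hFset : ∀ u : V, F.neighborSet u = N.neighborSet u \ T.neighborSet u := by
    intro u; ext x; simp [hF, mem_neighborSet, sdiff_adj, Set.mem_diff]
  -- key degree lemma: an endpoint of a non-tree edge with N-degree < 4 has F-degree 1
  have degF : ∀ u v : V, F.Adj u v → ¬ (4 ≤ ndeg N u) → ndeg F u = 1 := by
    intro u v huv hu4
    have huvN : N.Adj u v := huv.1
    have huvT : ¬ T.Adj u v := huv.2
    have hfin : (N.neighborSet u).Finite := Set.toFinite _
    have hvmem : v ∈ N.neighborSet u := huvN
    have h1 : 1 ≤ ndeg N u := (Set.ncard_pos hfin).mpr ⟨v, hvmem⟩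
    have hne1 : ndeg N u ≠ 1 := by
      intro h1'
      obtain ⟨a, ha⟩ := Set.ncard_eq_one.mp h1'
      have hav : a = v := by
        have := hvmem; rw [ha] at this; simpa using this.symm
      subst hav
      have hT1 : ndeg T u = 1 := (hleaf u).mpr h1'
      obtain ⟨b, hb⟩ := Set.ncard_eq_one.mp hT1
      have hbmem : b ∈ T.neighborSet u := by rw [hb]; exact rfl
      have : b ∈ N.neighborSet u := hsub u hbmem
      rw [ha] at this
      have : b = a := this
      subst this
      exact huvT hbmem
    have hN3 : ndeg N u = 3 := by
      have := hno2 u; unfold ndeg at *; omega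
    -- T-degree of u is 2
    have hTle : ndeg T u ≤ 3 := hN3 ▸ Set.ncard_le_ncard (hsub u) hfin
    have hTne3 : ndeg T u ≠ 3 := by
      intro h3
      have heq : T.neighborSet u = N.neighborSet u :=
        Set.eq_of_subset_of_ncard_le (hsub u) (by unfold ndeg at *; omega) hfin
      exact huvT (by rw [← heq] at hvmem; exact hvmem)
    have hTne1 : ndeg T u ≠ 1 := fun h1' => hne1 ((hleaf u).mp h1')
    have hTne0 : ndeg T u ≠ 0 := by
      intro h0
      have hTfin : (T.neighborSet u).Finite := Set.toFinite _
      have hempty : T.neighborSet u = ∅ := (Set.ncard_eq_zero hTfin).mp h0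
      obtain ⟨p⟩ := htree.isConnected.preconnected u v
      cases p with
      | nil => exact huvN.ne rfl
      | cons h' p' =>
        have : _ ∈ T.neighborSet u := h'
        rw [hempty] at this
        exact this
    have hT2 : ndeg T u = 2 := by omega
    -- conclude
    have : ndeg F u = ndeg N u - ndeg T u := by
      unfold ndeg
      rw [hFset u, Set.ncard_diff (hsub u) (Set.toFinite _)]
    omega
  -- every F-edge has an endpoint of F-degree 1
  have keyA : ∀ u v : V, F.Adj u v → ndeg F u = 1 ∨ ndeg F v = 1 := by
    intro u v huv
    by_cases hu : 4 ≤ ndeg N u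
    · by_cases hv : 4 ≤ ndeg N v
      · exact absurd (h4 u v huv.1 hu hv) huv.2
      · exact Or.inr (degF v u huv.symm hv)
    · exact Or.inl (degF u v huv hu)
  have hFpos : ∀ u v : V, F.Adj u v → 1 ≤ ndeg F u := by
    intro u v huv
    exact (Set.ncard_pos (Set.toFinite _)).mpr ⟨v, huv⟩
  have hFone : ∀ u v : V, F.Adj u v → ndeg F u = 1 → F.neighborSet u = {v} := by
    intro u v huv h1
    obtain ⟨a, ha⟩ := Set.ncard_eq_one.mp h1
    have : v ∈ F.neighborSet u := huv
    rw [ha] at this ⊢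
    simp at this
    rw [this]
  -- linear order proxy
  let e := Fintype.equivFin V
  -- center predicate for the star forest F
  let Center : V → Prop := fun v =>
    2 ≤ ndeg F v ∨ ∃ w, F.Adj v w ∧ ndeg F w = 1 ∧ (e v : ℕ) < (e w : ℕ)
  have hcen : ∀ u v : V, F.Adj u v → (Center u ↔ ¬ Center v) := by
    intro u v huv
    have hEne : (e u : ℕ) ≠ (e v : ℕ) := by
      intro hh
      exact huv.ne (e.injective (Fin.val_injective hh))
    rcases keyA u v huv with h1 | h1
    · have hNu := hFone u v huv h1
      by_cases hv1 : ndeg F v = 1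
      · have hNv := hFone v u huv.symm hv1
        have hcu : Center u ↔ (e u : ℕ) < (e v : ℕ) := by
          constructor
          · rintro (h2' | ⟨w, hw, hw1, hwlt⟩)
            · omega
            · have : w ∈ F.neighborSet u := hw
              rw [hNu] at this; simp at this; subst this; exact hwlt
          · intro hlt; exact Or.inr ⟨v, huv, hv1, hlt⟩
        have hcv : Center v ↔ (e v : ℕ) < (e u : ℕ) := by
          constructor
          · rintro (h2' | ⟨w, hw, hw1, hwlt⟩)
            · omega
            · have : w ∈ F.neighborSet v := hw
              rw [hNv] at this; simp at this; subst this; exact hwlt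
          · intro hlt; exact Or.inr ⟨u, huv.symm, h1, hlt⟩
        rw [hcu, hcv]; omega
      · have hv2 : 2 ≤ ndeg F v := by have := hFpos v u huv.symm; omega
        have hcv : Center v := Or.inl hv2
        have hcu : ¬ Center u := by
          rintro (h2' | ⟨w, hw, hw1, hwlt⟩)
          · omega
          · have : w ∈ F.neighborSet u := hw
            rw [hNu] at this; simp at this; subst this; exact hv1 hw1
        simp [hcu, hcv]
    · have hNv := hFone v u huv.symm h1
      by_cases hu1 : ndeg F u = 1
      · have hNu := hFone u v huv hu1
        have hcu : Center u ↔ (e u : ℕ) < (e v : ℕ) := by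
          constructor
          · rintro (h2' | ⟨w, hw, hw1, hwlt⟩)
            · omega
            · have : w ∈ F.neighborSet u := hw
              rw [hNu] at this; simp at this; subst this; exact hwlt
          · intro hlt; exact Or.inr ⟨v, huv, h1, hlt⟩
        have hcv : Center v ↔ (e v : ℕ) < (e u : ℕ) := by
          constructor
          · rintro (h2' | ⟨w, hw, hw1, hwlt⟩)
            · omega
            · have : w ∈ F.neighborSet v := hw
              rw [hNv] at this; simp at this; subst this; exact hwlt
          · intro hlt; exact Or.inr ⟨u, huv.symm, hu1, hlt⟩
        rw [hcu, hcv]; omega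
      · have hu2 : 2 ≤ ndeg F u := by have := hFpos u v huv; omega
        have hcu : Center u := Or.inl hu2
        have hcv : ¬ Center v := by
          rintro (h2' | ⟨w, hw, hw1, hwlt⟩)
          · omega
          · have : w ∈ F.neighborSet v := hw
            rw [hNv] at this; simp at this; subst this; exact hu1 hw1
        simp [hcu, hcv]
  -- build the 4-coloring
  rcases isEmpty_or_nonempty V with hV | hV
  · have c : N.Coloring (Bool × Bool) :=
      Coloring.mk (fun v => isEmptyElim v) (fun {a} _ => isEmptyElim a)
    have := c.colorable.chromaticNumber_le
    simpa using this
  · obtain ⟨r⟩ := hV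
    have c : N.Coloring (Bool × Bool) := by
      refine Coloring.mk
        (fun v => (decide (Even (T.dist r v)), decide (Center v))) ?_
      intro a b hab heq
      by_cases hT : T.Adj a b
      · -- first coordinates differ
        have hne := tree_adj_dist_ne htree r hT
        have h1 : T.dist r b ≤ T.dist r a + 1 := by
          calc T.dist r b ≤ T.dist r a + T.dist a b := htree.isConnected.dist_triangle
          _ = T.dist r a + 1 := by rw [dist_eq_one_iff_adj.mpr hT]
        have h2 : T.dist r a ≤ T.dist r b + 1 := by
          calc T.dist r a ≤ T.dist r b + T.dist b a := htree.isConnected.dist_triangle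
          _ = T.dist r b + 1 := by rw [dist_eq_one_iff_adj.mpr hT.symm]
        have hpar : ¬ (Even (T.dist r a) ↔ Even (T.dist r b)) := by
          rw [Nat.even_iff, Nat.even_iff]
          omega
        have := congrArg Prod.fst heq
        simp only [decide_eq_decide] at this
        exact hpar this
      · have hFab : F.Adj a b := ⟨hab, hT⟩
        have := congrArg Prod.snd heq
        simp only [decide_eq_decide] at this
        have hiff := hcen a b hFab
        rcases Classical.em (Center b) with hb | hb
        · exact (hiff.mp (this.mpr hb)) hb
        · exact hb (this.mp (hiff.mpr hb))
    have := c.colorable.chromaticNumber_le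
    simpa using this
end

section
/- Let N be a strongly tree-based phylogenetic network. Then the clique number ω(N) is at most 3, while for every k ∈ ℕ there exists a tree-based network with clique number at least k. -/
/-!
In a 4-clique `K` of a network `N` with strong tree-based witness `T`, the vertices of degree at
least 4 are pairwise joined in `T`, while a vertex of degree 3 has all its neighbours in `K` and is
not a leaf of `T`, so it has at least two `T`-neighbours in `K`. A short case analysis shows that
these constraints force a triangle or a 4-cycle in the forest `T`.

Conversely, a path together with a complete graph on its inner vertices is tree-based, the path
itself being the spanning tree, and contains arbitrarily large cliques.
-/

open SimpleGraph

namespace SimpleGraph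

variable {V : Type*} {T : SimpleGraph V}

lemma IsAcyclic.not_adj_of_adj_of_adj (hT : T.IsAcyclic) {x y z : V} (hxy : T.Adj x y)
    (hxz : T.Adj x z) : ¬T.Adj y z := fun hyz ↦ by
  classical
  exact hT.cliqueFree le_rfl {x, y, z} (is3Clique_triple_iff.2 ⟨hxy, hxz, hyz⟩)

lemma IsAcyclic.subsingleton_commonNeighbors (hT : T.IsAcyclic) {x w : V} (hxw : x ≠ w) :
    (T.commonNeighbors x w).Subsingleton := by
  rintro y ⟨hxy : T.Adj x y, hwy : T.Adj w y⟩ z ⟨hxz : T.Adj x z, hwz : T.Adj w z⟩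
  have hp : (Walk.cons hxy (Walk.cons hwy.symm Walk.nil)).IsPath := by
    simp [hxw, hxy.ne, hwy.ne']
  have hq : (Walk.cons hxz (Walk.cons hwz.symm Walk.nil)).IsPath := by
    simp [hxw, hxz.ne, hwz.ne']
  have := (hT.subsingleton_path x w).elim ⟨_, hp⟩ ⟨_, hq⟩
  simpa using congrArg (fun p : T.Path x w ↦ p.1.getVert 1) this

/-- The constraints that a strong tree-based witness `T` imposes on a clique `K` of the network,
`high` marking the vertices of degree at least 4. -/
def ForcedOn (T : SimpleGraph V) (high : V → Prop) (K : Finset V) : Prop :=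
  (∀ u ∈ K, ∀ v ∈ K, u ≠ v → high u → high v → T.Adj u v) ∧
    ∀ v ∈ K, ¬high v → ∀ p ∈ K, ∀ q ∈ K, v ≠ p → v ≠ q → p ≠ q → T.Adj v p ∨ T.Adj v q

namespace ForcedOn

variable {high : V → Prop} {K : Finset V} {x y z w : V}

lemma false_of_adj_of_adj_of_high (h : ForcedOn T high K) (hT : T.IsAcyclic) (hx : x ∈ K)
    (hy : y ∈ K) (hw : w ∈ K) (hxy : x ≠ y) (hxw : x ≠ w) (hyw : y ≠ w) (hyz : y ≠ z)
    (hTxy : T.Adj x y) (hTxz : T.Adj x z) (hTzw : T.Adj z w) (hy_high : high y) : False := by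
  by_cases hw_high : high w
  · have hTyw := h.1 y hy w hw hyw hy_high hw_high
    exact hyz (hT.subsingleton_commonNeighbors hxw ⟨hTxy, hTyw.symm⟩ ⟨hTxz, hTzw.symm⟩)
  · rcases h.2 w hw hw_high x hx y hy hxw.symm hyw.symm hxy with hTwx | hTwy
    · exact hT.not_adj_of_adj_of_adj hTxz.symm hTzw hTwx.symm
    · exact hyz (hT.subsingleton_commonNeighbors hxw ⟨hTxy, hTwy⟩ ⟨hTxz, hTzw.symm⟩)

lemma false_of_adj_of_adj (h : ForcedOn T high K) (hT : T.IsAcyclic) (hx : x ∈ K) (hy : y ∈ K)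
    (hz : z ∈ K) (hw : w ∈ K) (hxy : x ≠ y) (hxz : x ≠ z) (hxw : x ≠ w) (hyz : y ≠ z)
    (hyw : y ≠ w) (hzw : z ≠ w) (hTxy : T.Adj x y) (hTxz : T.Adj x z) : False := by
  have hTyz : ¬T.Adj y z := hT.not_adj_of_adj_of_adj hTxy hTxz
  have hy_or : high y ∨ T.Adj y w := by
    by_cases hy_high : high y
    · exact .inl hy_high
    · exact .inr ((h.2 y hy hy_high z hz w hw hyz hyw hzw).resolve_left hTyz)
  have hz_or : high z ∨ T.Adj z w := by
    by_cases hz_high : high z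
    · exact .inl hz_high
    · exact .inr ((h.2 z hz hz_high y hy w hw hyz.symm hzw hyw).resolve_left (hTyz ∘ .symm))
  rcases hy_or with hy_high | hTyw <;> rcases hz_or with hz_high | hTzw
  · exact hTyz (h.1 y hy z hz hyz hy_high hz_high)
  · exact h.false_of_adj_of_adj_of_high hT hx hy hw hxy hxw hyw hyz hTxy hTxz hTzw hy_high
  · exact h.false_of_adj_of_adj_of_high hT hx hz hw hxz hxw hzw hyz.symm hTxz hTxy hTyw hz_high
  · exact hyz (hT.subsingleton_commonNeighbors hxw ⟨hTxy, hTyw.symm⟩ ⟨hTxz, hTzw.symm⟩)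

lemma false_of_not_high (h : ForcedOn T high K) (hT : T.IsAcyclic) (hx : x ∈ K) (hy : y ∈ K)
    (hz : z ∈ K) (hw : w ∈ K) (hxy : x ≠ y) (hxz : x ≠ z) (hxw : x ≠ w) (hyz : y ≠ z)
    (hyw : y ≠ w) (hzw : z ≠ w) (hx_high : ¬high x) : False := by
  have hyz_or := h.2 x hx hx_high y hy z hz hxy hxz hyz
  have hyw_or := h.2 x hx hx_high y hy w hw hxy hxw hyw
  have hzw_or := h.2 x hx hx_high z hz w hw hxz hxw hzw
  by_cases hTxy : T.Adj x y
  · rcases hzw_or with hTxz | hTxw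
    · exact h.false_of_adj_of_adj hT hx hy hz hw hxy hxz hxw hyz hyw hzw hTxy hTxz
    · exact h.false_of_adj_of_adj hT hx hy hw hz hxy hxw hxz hyw hyz hzw.symm hTxy hTxw
  · exact h.false_of_adj_of_adj hT hx hz hw hy hxz hxw hxy hzw hyz.symm hyw.symm
      (hyz_or.resolve_left hTxy) (hyw_or.resolve_left hTxy)

lemma card_le_three (h : ForcedOn T high K) (hT : T.IsAcyclic) : K.card ≤ 3 := by
  by_contra! hK
  obtain ⟨x, hx, y, hy, z, hz, w, hw, hxy, hxz, hxw, hyz, hyw, hzw⟩ := Finset.three_lt_card.1 hK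
  by_cases hx_high : high x
  · by_cases hy_high : high y
    · by_cases hz_high : high z
      · exact h.false_of_adj_of_adj hT hx hy hz hw hxy hxz hxw hyz hyw hzw
          (h.1 x hx y hy hxy hx_high hy_high) (h.1 x hx z hz hxz hx_high hz_high)
      · exact h.false_of_not_high hT hz hx hy hw hxz.symm hyz.symm hzw hxy hxw hyw hz_high
    · exact h.false_of_not_high hT hy hx hz hw hxy.symm hyz hyw hxz hxw hzw hy_high
  · exact h.false_of_not_high hT hx hy hz hw hxy hxz hxw hyz hyw hzw hx_high

end ForcedOn

lemma two_le_ndeg_of_ne_one [Finite V] (hT : T.Connected) {u v : V} (huv : u ≠ v)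
    (hv : ndeg T v ≠ 1) : 2 ≤ ndeg T v := by
  have : Nontrivial V := ⟨u, v, huv⟩
  obtain ⟨w, hw⟩ := hT.preconnected.exists_adj_of_nontrivial v
  have : 0 < ndeg T v := (Set.ncard_pos (Set.toFinite _)).2 ⟨w, hw⟩
  omega

lemma adj_or_adj_of_neighborSet_subset [Finite V] {S : Set V} {v p q : V}
    (hS : T.neighborSet v ⊆ S) (hcard : S.ncard ≤ 3) (hdeg : 2 ≤ ndeg T v) (hp : p ∈ S)
    (hq : q ∈ S) (hpq : p ≠ q) : T.Adj v p ∨ T.Adj v q := by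
  by_contra! ⟨hvp, hvq⟩
  have hsub : T.neighborSet v ⊆ S \ {p, q} := fun u hu ↦
    ⟨hS hu, by rintro (rfl | rfl) <;> contradiction⟩
  have := Set.ncard_le_ncard hsub
  rw [Set.ncard_sdiff (Set.insert_subset hp (Set.singleton_subset_iff.2 hq)),
    Set.ncard_pair hpq] at this
  unfold ndeg at hdeg
  omega

lemma pathGraph_isTree (n : ℕ) : (pathGraph (n + 1)).IsTree := by
  rw [isTree_iff_connected_and_card]
  refine ⟨pathGraph_connected n, ?_⟩
  let f : Fin n → (pathGraph (n + 1)).edgeSet := fun i ↦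
    ⟨s(i.castSucc, i.succ), by simp [pathGraph_adj]⟩
  have hf : Function.Bijective f := by
    refine ⟨fun i j hij ↦ ?_, fun ⟨e, he⟩ ↦ ?_⟩
    · simp only [f, Subtype.mk.injEq, Sym2.eq_iff, Fin.ext_iff, Fin.val_castSucc,
        Fin.val_succ] at hij
      exact Fin.ext (by omega)
    · induction e using Sym2.ind with
      | h u v =>
        rcases pathGraph_adj.1 he with h | h <;> dsimp only at h
        · exact ⟨⟨u, by omega⟩, Subtype.ext (Sym2.eq_iff.2 (.inl ⟨rfl, Fin.ext (by simp [h])⟩))⟩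
        · exact ⟨⟨v, by omega⟩, Subtype.ext (Sym2.eq_iff.2 (.inr ⟨rfl, Fin.ext (by simp [h])⟩))⟩
  rw [← Nat.card_eq_of_bijective f hf, Nat.card_fin, Nat.card_fin]

lemma ndeg_pathGraph_of_notMem_Ioo {n : ℕ} {v : Fin (n + 2)}
    (hv : v ∉ Set.Ioo 0 (Fin.last (n + 1))) : ndeg (pathGraph (n + 2)) v = 1 := by
  simp only [Set.mem_Ioo, Fin.lt_def, Fin.val_zero, Fin.val_last, not_and_or, not_lt] at hv
  rw [ndeg, Set.ncard_eq_one]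
  rcases hv with hv | hv
  · refine ⟨1, Set.ext fun w ↦ ?_⟩
    simp only [mem_neighborSet, pathGraph_adj, Set.mem_singleton_iff, Fin.ext_iff, Fin.val_one]
    omega
  · refine ⟨(Fin.last n).castSucc, Set.ext fun w ↦ ?_⟩
    simp only [mem_neighborSet, pathGraph_adj, Set.mem_singleton_iff, Fin.ext_iff,
      Fin.val_castSucc, Fin.val_last]
    omega

lemma two_le_ndeg_pathGraph_of_mem_Ioo {n : ℕ} {v : Fin (n + 2)}
    (hv : v ∈ Set.Ioo 0 (Fin.last (n + 1))) : 2 ≤ ndeg (pathGraph (n + 2)) v := by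
  simp only [Set.mem_Ioo, Fin.lt_def, Fin.val_zero, Fin.val_last] at hv
  refine (Set.one_lt_ncard_iff (Set.toFinite _)).2
    ⟨⟨v.val - 1, by omega⟩, ⟨v.val + 1, by omega⟩, ?_⟩
  refine ⟨?_, ?_, ?_⟩ <;> simp [pathGraph_adj]
  omega

lemma neighborSet_sup_fromEdgeSet_sym2_of_notMem {G : SimpleGraph V} {s : Set V} {v : V}
    (hv : v ∉ s) : (G ⊔ fromEdgeSet s.sym2).neighborSet v = G.neighborSet v := by
  ext w
  simp [hv]

lemma ncard_sub_one_le_ndeg_sup_fromEdgeSet_sym2 [Finite V] {G : SimpleGraph V} {s : Set V}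
    {v : V} (hv : v ∈ s) : s.ncard - 1 ≤ ndeg (G ⊔ fromEdgeSet s.sym2) v := by
  rw [← Set.ncard_sdiff_singleton_of_mem hv]
  exact Set.ncard_le_ncard fun w hw ↦ .inr ⟨⟨hv, hw.1⟩, Ne.symm hw.2⟩

end SimpleGraph

namespace IsSTBWitness

variable {V : Type*} {N T : SimpleGraph V}

lemma forcedOn_of_isNClique [Finite V] (hW : IsSTBWitness N T) {s : Finset V}
    (hs : N.IsNClique 4 s) : ForcedOn T (fun v ↦ 4 ≤ ndeg N v) s := by
  classical
  refine ⟨fun u hu v hv huv ↦ hW.2.2.2.1 u v (hs.1 hu hv huv), ?_⟩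
  intro v hv hlow p hp q hq hvp hvq hpq
  have hsub : (↑(s.erase v) : Set V) ⊆ N.neighborSet v := fun u hu ↦
    hs.1 hv (Finset.mem_of_mem_erase hu) (Finset.ne_of_mem_erase hu).symm
  have hcard : (↑(s.erase v) : Set V).ncard = 3 := by
    rw [Set.ncard_coe_finset, Finset.card_erase_of_mem hv, hs.card_eq]
  have hN : N.neighborSet v = ↑(s.erase v) :=
    (Set.eq_of_subset_of_ncard_le hsub (by unfold ndeg at hlow; omega)).symm
  have hdeg : 2 ≤ ndeg T v := two_le_ndeg_of_ne_one hW.2.1.connected hvp.symm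
    (by rw [ne_eq, hW.2.2.1, ndeg, hN, hcard]; decide)
  exact adj_or_adj_of_neighborSet_subset (hN ▸ fun u hu ↦ hW.1 hu) hcard.le hdeg
    (by simp [hp, hvp.symm]) (by simp [hq, hvq.symm]) hpq

lemma cliqueFree_four [Finite V] (hW : IsSTBWitness N T) : N.CliqueFree 4 := fun s hs ↦ by
  have := (hW.forcedOn_of_isNClique hs).card_le_three hW.2.1.isAcyclic
  rw [hs.card_eq] at this
  omega

end IsSTBWitness

theorem exists_treeBased_isNClique (k : ℕ) :
    ∃ (n : ℕ) (H : SimpleGraph (Fin n)), H.Connected ∧ (∀ v, ndeg H v ≠ 2) ∧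
      (∃ T ≤ H, T.IsTree ∧ ∀ v, ndeg T v = 1 ↔ ndeg H v = 1) ∧
      ∃ s : Finset (Fin n), H.IsNClique k s := by
  let I : Finset (Fin (k + 6)) := Finset.Ioo 0 (Fin.last (k + 5))
  have hI : I.card = k + 4 := by simp [I, Fin.card_Ioo]
  let H := pathGraph (k + 6) ⊔ fromEdgeSet (I : Set (Fin (k + 6))).sym2
  have hdeg : ∀ v ∈ I, k + 3 ≤ ndeg H v := fun v hv ↦ by
    have : (I : Set (Fin (k + 6))).ncard - 1 ≤ ndeg H v :=
      ncard_sub_one_le_ndeg_sup_fromEdgeSet_sym2 (Finset.mem_coe.2 hv)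
    rw [Set.ncard_coe_finset, hI] at this
    omega
  have hout : ∀ v ∉ I, ndeg H v = ndeg (pathGraph (k + 6)) v := fun v hv ↦ by
    rw [ndeg, ndeg, neighborSet_sup_fromEdgeSet_sym2_of_notMem (Finset.mem_coe.not.2 hv)]
  refine ⟨k + 6, H, (pathGraph_connected _).mono le_sup_left, fun v ↦ ?_,
    ⟨pathGraph (k + 6), le_sup_left, pathGraph_isTree _, fun v ↦ ?_⟩, ?_⟩
  · by_cases hv : v ∈ I
    · have := hdeg v hv
      omega
    · rw [hout v hv, ndeg_pathGraph_of_notMem_Ioo (by simpa [I] using hv)]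
      decide
  · by_cases hv : v ∈ I
    · have := hdeg v hv
      have : 2 ≤ ndeg (pathGraph (k + 6)) v :=
        two_le_ndeg_pathGraph_of_mem_Ioo (by simpa [I] using hv)
      omega
    · rw [hout v hv]
  · obtain ⟨t, htI, htk⟩ := Finset.exists_subset_card_eq (show k ≤ I.card by omega)
    have hclique : (fromEdgeSet (I : Set (Fin (k + 6))).sym2).IsClique I :=
      fun a ha b hb hab ↦ by simp [ha, hb, hab]
    exact ⟨t, ((hclique.subset (Finset.coe_subset.2 htI)).mono le_sup_right), htk⟩

theorem stmt_19_general {V : Type*} [Fintype V] (N : SimpleGraph V)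
    (hstb : ∃ T, IsSTBWitness N T) :
    N.CliqueFree 4 ∧
    ∀ k : ℕ, ∃ (n : ℕ) (H : SimpleGraph (Fin n)), H.Connected ∧ (∀ v, ndeg H v ≠ 2) ∧
      (∃ T ≤ H, T.IsTree ∧ ∀ v, ndeg T v = 1 ↔ ndeg H v = 1) ∧
      ∃ s : Finset (Fin n), H.IsNClique k s := by
  obtain ⟨T, hT⟩ := hstb
  exact ⟨hT.cliqueFree_four, exists_treeBased_isNClique⟩

/-- A strongly tree-based network has clique number at most 3 (no 4-clique), while for every
k there is a tree-based network containing a clique of size k. -/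
theorem stmt_19 {V : Type*} [Fintype V] (N : SimpleGraph V) (hconn : N.Connected)
    (hno2 : ∀ v, ndeg N v ≠ 2) (hstb : ∃ T, IsSTBWitness N T) :
    N.CliqueFree 4 ∧
    ∀ k : ℕ, ∃ (n : ℕ) (H : SimpleGraph (Fin n)), H.Connected ∧ (∀ v, ndeg H v ≠ 2) ∧
      (∃ T ≤ H, T.IsTree ∧ ∀ v, ndeg T v = 1 ↔ ndeg H v = 1) ∧
      ∃ s : Finset (Fin n), H.IsNClique k s :=
  stmt_19_general N hstb
end
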